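/- Decoupling of the zeros of the coupled twist function (Theorem 2.1, first part / Lemma on zeros). There exist ε > 0 and functions ζ_1, …, ζ_M, defined for real γ with 0 < |γ| < ε, such that for every such γ: (i) ζ_1(γ), …, ζ_M(γ) are pairwise distinct, they are exactly the zeros of the coupled twist function φ_γ, and each of them is a simple zero of φ_γ; (ii) there is a constant C > 0 with |ζ_i(γ) − ζ^{(1)}_i| ≤ C|γ| for all i ∈ {1,…,M_1} and |ζ_i(γ) − γ^{−1} − ζ^{(2)}_i| ≤ C|γ| for all i ∈ {M_1+1,…,M}. Moreover, this labelling of the zeros of φ_γ is the unique one satisfying the asymptotics (ii). -/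

import Mathlib

open scoped BigOperators Topology
open Filter

/-- The partial-fraction part `χ(w) = Σ_α Σ_{p=0}^{m_α-1} ℓ^α_p (w - z_α)^{-(p+1)}` of a twist
function.  Here the site `α` has multiplicity `m α + 1` (so multiplicities are `≥ 1`) and the
levels are `l α 0, …, l α (m α)`. -/
noncomputable def chiFun {n : ℕ} (z : Fin n → ℂ) (m : Fin n → ℕ)
    (l : Fin n → ℕ → ℂ) (w : ℂ) : ℂ :=
  ∑ a, ∑ p ∈ Finset.range (m a + 1), l a p / (w - z a) ^ (p + 1)

/-!
Clearing the denominators `∏ (w - z₁)^(m₁+1)` and `∏ (γ (w - z₂) - 1)^(m₂+1)` turns `φ_γ` into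
a polynomial `Q_γ(w)` of degree at most `M₁ + M₂` that also depends polynomially on `γ`, with
`Q_0 = ± ∏ (w - z₁)^(m₁+1) · φ₁`. The implicit function theorem continues each simple zero of
`φ₁` to a zero of `Q_γ` within `O(γ)`; the same argument for the swapped pair `(φ₂, φ₁)` at `-γ`,
shifted by `γ⁻¹`, continues the zeros of `φ₂`. For small `γ` these `M₁ + M₂` zeros are distinct
and avoid the poles, so they exhaust the roots of `Q_γ` and all of them are simple. Another
labelling with the same asymptotics picks the same zeros, since distinct labels separate.
-/

open Polynomial Asymptotics

section ClearedDenominators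

variable {R : Type*} [CommRing R] {ι : Type*} [Fintype ι]

def clearedDenom (u : ι → R) (m : ι → ℕ) : R := ∏ a, u a ^ (m a + 1)

def clearedNumer [DecidableEq ι] (u : ι → R) (m : ι → ℕ) (c : ι → ℕ → R) : R :=
  ∑ a, ∑ p ∈ Finset.range (m a + 1),
    c a p * u a ^ (m a - p) * ∏ b ∈ Finset.univ.erase a, u b ^ (m b + 1)

lemma eval_clearedDenom (u : ι → R[X]) (m : ι → ℕ) (w : R) :
    (clearedDenom u m).eval w = clearedDenom (fun a => (u a).eval w) m := by
  simp [clearedDenom, eval_prod]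

lemma eval_clearedNumer [DecidableEq ι] (u : ι → R[X]) (m : ι → ℕ) (c : ι → ℕ → R[X]) (w : R) :
    (clearedNumer u m c).eval w =
      clearedNumer (fun a => (u a).eval w) m (fun a p => (c a p).eval w) := by
  simp [clearedNumer, eval_prod, eval_finsetSum]

lemma clearedDenom_ne_zero {K : Type*} [Field K] {u : ι → K} (m : ι → ℕ) (hu : ∀ a, u a ≠ 0) :
    clearedDenom u m ≠ 0 :=
  Finset.prod_ne_zero_iff.2 fun a _ => pow_ne_zero _ (hu a)

lemma clearedDenom_mul_sum_div [DecidableEq ι] {K : Type*} [Field K] {u : ι → K} (m : ι → ℕ)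
    (c : ι → ℕ → K) (hu : ∀ a, u a ≠ 0) :
    clearedDenom u m * ∑ a, ∑ p ∈ Finset.range (m a + 1), c a p / u a ^ (p + 1) =
      clearedNumer u m c := by
  simp only [clearedNumer, Finset.mul_sum]
  refine Finset.sum_congr rfl fun a _ => Finset.sum_congr rfl fun p hp => ?_
  have hpm : m a + 1 = (p + 1) + (m a - p) := by
    have := Finset.mem_range.1 hp; omega
  rw [clearedDenom, ← Finset.mul_prod_erase _ _ (Finset.mem_univ a), hpm, pow_add]
  field_simp [pow_ne_zero (p + 1) (hu a)]

lemma Polynomial.coeff_prod_sum_of_natDegree_le {κ : Type*} (s : Finset κ) (f : κ → R[X])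
    (d : κ → ℕ) (h : ∀ i ∈ s, (f i).natDegree ≤ d i) :
    (∏ i ∈ s, f i).coeff (∑ i ∈ s, d i) = ∏ i ∈ s, (f i).coeff (d i) := by
  classical
  induction s using Finset.cons_induction with
  | empty => simp
  | cons a s ha ih =>
    have hs : ∀ i ∈ s, (f i).natDegree ≤ d i := fun i hi => h i (Finset.mem_cons_of_mem hi)
    rw [Finset.prod_cons, Finset.sum_cons, Finset.prod_cons,
      coeff_mul_add_eq_of_natDegree_le (h a (Finset.mem_cons_self a s))
        ((natDegree_prod_le _ _).trans (Finset.sum_le_sum hs)), ih hs]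

lemma Polynomial.natDegree_pow_le_of_natDegree_le_one {p : R[X]} (hp : p.natDegree ≤ 1) (k : ℕ) :
    (p ^ k).natDegree ≤ k :=
  (natDegree_pow_le_of_le k hp).trans_eq (mul_one k)

variable {u : ι → R[X]}

lemma natDegree_clearedDenom_le (hu : ∀ a, (u a).natDegree ≤ 1) (m : ι → ℕ) :
    (clearedDenom u m).natDegree ≤ ∑ a, (m a + 1) :=
  (natDegree_prod_le _ _).trans <| Finset.sum_le_sum fun a _ =>
    natDegree_pow_le_of_natDegree_le_one (hu a) _

lemma coeff_clearedDenom (hu : ∀ a, (u a).natDegree ≤ 1) (m : ι → ℕ) :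
    (clearedDenom u m).coeff (∑ a, (m a + 1)) = ∏ a, (u a).coeff 1 ^ (m a + 1) := by
  rw [clearedDenom, coeff_prod_sum_of_natDegree_le _ _ _ fun a _ =>
    natDegree_pow_le_of_natDegree_le_one (hu a) _]
  refine Finset.prod_congr rfl fun a _ => ?_
  simpa using coeff_pow_of_natDegree_le (m := m a + 1) (hu a)

lemma degree_clearedNumer_lt [DecidableEq ι] (hu : ∀ a, (u a).natDegree ≤ 1) (m : ι → ℕ)
    (c : ι → ℕ → R) :
    (clearedNumer u m fun a p => C (c a p)).degree < ∑ a, (m a + 1) := by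
  refine (degree_sum_le _ _).trans_lt <| (Finset.sup_lt_iff (WithBot.bot_lt_coe _)).2
    fun a _ => (degree_sum_le _ _).trans_lt <| (Finset.sup_lt_iff (WithBot.bot_lt_coe _)).2
    fun p hp => (degree_le_natDegree).trans_lt ?_
  have hp : p < m a + 1 := Finset.mem_range.1 hp
  have hsum := Finset.add_sum_erase Finset.univ (fun b => m b + 1) (Finset.mem_univ a)
  have hdeg : (C (c a p) * u a ^ (m a - p) *
      ∏ b ∈ Finset.univ.erase a, u b ^ (m b + 1)).natDegree ≤
      (m a - p) + ∑ b ∈ Finset.univ.erase a, (m b + 1) :=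
    natDegree_mul_le.trans <| add_le_add
      (natDegree_mul_le.trans (by simpa using natDegree_pow_le_of_natDegree_le_one (hu a) _))
      ((natDegree_prod_le _ _).trans (Finset.sum_le_sum fun b _ =>
        natDegree_pow_le_of_natDegree_le_one (hu b) _))
  exact_mod_cast hdeg.trans_lt (by omega)

end ClearedDenominators

lemma Polynomial.roots_eq_of_natDegree_le_card {K : Type*} [CommRing K] [IsDomain K] {p : K[X]}
    (hp : p ≠ 0) {s : Finset K} (hs : ∀ x ∈ s, p.IsRoot x) (hdeg : p.natDegree ≤ s.card) :
    p.roots = s.val :=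
  (Multiset.eq_of_le_of_card_le ((Multiset.le_iff_subset s.nodup).2 fun x hx =>
    (mem_roots hp).2 (hs x hx)) ((card_roots' p).trans hdeg)).symm

lemma ContinuousLinearMap.isInvertible_of_apply_one_ne_zero {𝕜 : Type*} [NontriviallyNormedField 𝕜]
    {L : 𝕜 →L[𝕜] 𝕜} (h : L 1 ≠ 0) : L.IsInvertible := by
  refine ⟨ContinuousLinearEquiv.unitsEquivAut 𝕜 (Units.mk0 _ h), ?_⟩
  ext1
  simp

lemma exists_isBigO_implicit_zero {𝕜 : Type*} [RCLike 𝕜] {f : 𝕜 × 𝕜 → 𝕜} {x₀ y₀ : 𝕜}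
    (hf : ContDiffAt 𝕜 1 f (x₀, y₀)) (h0 : f (x₀, y₀) = 0)
    (hy : deriv (fun y => f (x₀, y)) y₀ ≠ 0) :
    ∃ Z : 𝕜 → 𝕜, (fun x => Z x - y₀) =O[𝓝 x₀] (fun x => x - x₀) ∧
      ∀ᶠ x in 𝓝 x₀, f (x, Z x) = 0 := by
  have hpartial : (fderiv 𝕜 f (x₀, y₀) ∘L .inr 𝕜 𝕜 𝕜) 1 = deriv (fun y => f (x₀, y)) y₀ :=
    ((hf.differentiableAt one_ne_zero).hasFDerivAt.comp_hasDerivAt y₀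
      ((hasDerivAt_const y₀ x₀).prodMk (hasDerivAt_id y₀))).deriv.symm
  have hinv := ContinuousLinearMap.isInvertible_of_apply_one_ne_zero (hpartial ▸ hy)
  refine ⟨hf.implicitFunction one_ne_zero hinv, ?_, ?_⟩
  · simpa [hf.implicitFunction_apply_self] using
      (hf.hasStrictFDerivAt_implicitFunction one_ne_zero hinv).hasFDerivAt.isBigO_sub
  · simpa [h0] using hf.eventually_apply_implicitFunction one_ne_zero hinv

lemma deriv_eq_mul_deriv_of_eventuallyEq {𝕜 : Type*} [NontriviallyNormedField 𝕜]
    {f h φ : 𝕜 → 𝕜} {x : 𝕜} (hf : f =ᶠ[𝓝 x] fun w => h w * φ w)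
    (hh : DifferentiableAt 𝕜 h x) (hφ : DifferentiableAt 𝕜 φ x) (hφx : φ x = 0) :
    deriv f x = h x * deriv φ x := by
  rw [hf.deriv_eq, deriv_fun_mul hh hφ, hφx]
  ring

lemma eventually_forall_ne_nhds {X ι : Type*} [TopologicalSpace X] [T1Space X] [Finite ι]
    {z : ι → X} {x : X} (hx : ∀ a, x ≠ z a) :
    ∀ᶠ w in 𝓝 x, ∀ a, w ≠ z a :=
  Filter.eventually_all.2 fun a => eventually_ne_nhds (hx a)

lemma Filter.Tendsto.eventually_ne_of_ne {α X : Type*} [TopologicalSpace X] [T2Space X]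
    {l : Filter α} {F G : α → X} {a b : X} (hF : Tendsto F l (𝓝 a)) (hG : Tendsto G l (𝓝 b))
    (hab : a ≠ b) : ∀ᶠ x in l, F x ≠ G x :=
  (hF.prodMk_nhds hG).eventually (isClosed_diagonal.isOpen_compl.mem_nhds hab)

lemma eventually_ne_add_inv {α 𝕜 : Type*} [NormedField 𝕜] {l : Filter α} {t F D : α → 𝕜} {c d : 𝕜}
    (ht : Tendsto t l (𝓝[≠] 0)) (hF : Tendsto F l (𝓝 c)) (hD : Tendsto D l (𝓝 d)) :
    ∀ᶠ x in l, F x ≠ D x + (t x)⁻¹ := by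
  have hlim : Tendsto (fun x => t x * (F x - D x)) l (𝓝 0) := by
    simpa using (tendsto_nhds_of_tendsto_nhdsWithin ht).mul (hF.sub hD)
  filter_upwards [hlim.eventually_ne zero_ne_one, ht self_mem_nhdsWithin] with x hx htx h
  apply hx
  rw [h, add_sub_cancel_left, mul_inv_cancel₀ htx]

lemma tendsto_ofReal_mul_nhdsNE {c : ℂ} (hc : c ≠ 0) :
    Tendsto (fun γ : ℝ => c * γ) (𝓝[≠] 0) (𝓝[≠] 0) := by
  refine tendsto_nhdsWithin_iff.2 ⟨?_, eventually_nhdsWithin_of_forall fun γ hγ =>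
    mul_ne_zero hc (Complex.ofReal_ne_zero.2 hγ)⟩
  simpa using ((Complex.continuous_ofReal.tendsto 0).const_mul c).mono_left nhdsWithin_le_nhds

lemma tendsto_ofReal_nhdsNE : Tendsto (fun γ : ℝ => (γ : ℂ)) (𝓝[≠] 0) (𝓝[≠] 0) := by
  simpa using tendsto_ofReal_mul_nhdsNE one_ne_zero

lemma eventually_nhdsNE_zero_iff {P : ℝ → Prop} :
    (∀ᶠ γ in 𝓝[≠] 0, P γ) ↔ ∃ ε > 0, ∀ γ, 0 < |γ| → |γ| < ε → P γ := by
  simp only [eventually_nhdsWithin_iff, Metric.eventually_nhds_iff, Real.dist_eq, sub_zero,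
    Set.mem_compl_singleton_iff, abs_pos]
  constructor
  · rintro ⟨ε, hε, h⟩
    exact ⟨ε, hε, fun γ hγ hγε => h hγε hγ⟩
  · rintro ⟨ε, hε, h⟩
    exact ⟨ε, hε, fun γ hγε hγ => h γ hγ hγε⟩

lemma mul_sub_sub_one_ne_zero {K : Type*} [Field K] {g w z : K} (hg : g ≠ 0) (hw : w ≠ z + g⁻¹) :
    g * (w - z) - 1 ≠ 0 := by
  contrapose! hw
  field_simp
  linear_combination hw

lemma differentiableAt_chiFun {n : ℕ} (z : Fin n → ℂ) (m : Fin n → ℕ) (l : Fin n → ℕ → ℂ)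
    {w : ℂ} (hw : ∀ a, w ≠ z a) : DifferentiableAt ℂ (chiFun z m l) w := by
  unfold chiFun
  refine DifferentiableAt.fun_sum fun a _ => DifferentiableAt.fun_sum fun p _ => ?_
  exact (differentiableAt_const _).div (by fun_prop) (pow_ne_zero _ (sub_ne_zero.2 (hw a)))

lemma chiFun_sub_inv {n : ℕ} (z : Fin n → ℂ) (m : Fin n → ℕ) (l : Fin n → ℕ → ℂ) {g : ℂ}
    (hg : g ≠ 0) (w : ℂ) :
    chiFun z m l (w - g⁻¹) =
      ∑ a, ∑ p ∈ Finset.range (m a + 1), g ^ (p + 1) * l a p / (g * (w - z a) - 1) ^ (p + 1) := by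
  refine Finset.sum_congr rfl fun a _ => Finset.sum_congr rfl fun p _ => ?_
  rw [show g * (w - z a) - 1 = g * (w - g⁻¹ - z a) by field_simp; ring, mul_pow,
    mul_div_mul_left _ _ (pow_ne_zero _ hg)]

section CoupledTwist

variable {n₁ n₂ : ℕ} (z1 : Fin n₁ → ℂ) (m1 : Fin n₁ → ℕ) (l1 : Fin n₁ → ℕ → ℂ)
  (z2 : Fin n₂ → ℂ) (m2 : Fin n₂ → ℕ) (l2 : Fin n₂ → ℕ → ℂ) (linf : ℂ)

noncomputable def coupledTwist (g w : ℂ) : ℂ := chiFun z1 m1 l1 w + chiFun z2 m2 l2 (w - g⁻¹) - linf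

/-- Poles are excluded explicitly: at a pole `chiFun` takes the junk value from `x / 0 = 0`. -/
def IsCoupledZero (g w : ℂ) : Prop :=
  (∀ a, w ≠ z1 a) ∧ (∀ a, w ≠ z2 a + g⁻¹) ∧ coupledTwist z1 m1 l1 z2 m2 l2 linf g w = 0

lemma coupledTwist_swap (g w : ℂ) :
    coupledTwist z2 m2 l2 z1 m1 l1 linf (-g) w =
      coupledTwist z1 m1 l1 z2 m2 l2 linf g (w + g⁻¹) := by
  simp only [coupledTwist, inv_neg, sub_neg_eq_add, add_sub_cancel_right]
  ring

lemma IsCoupledZero.of_swap {g w : ℂ} (h : IsCoupledZero z2 m2 l2 z1 m1 l1 linf (-g) w) :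
    IsCoupledZero z1 m1 l1 z2 m2 l2 linf g (w + g⁻¹) := by
  obtain ⟨h2, h1, h0⟩ := h
  refine ⟨fun a ha => h1 a ?_, fun a ha => h2 a (add_right_cancel ha), ?_⟩
  · rw [inv_neg, ← ha]; ring
  · rwa [← coupledTwist_swap]

lemma differentiableAt_coupledTwist {g w : ℂ} (hw1 : ∀ a, w ≠ z1 a) (hw2 : ∀ a, w ≠ z2 a + g⁻¹) :
    DifferentiableAt ℂ (coupledTwist z1 m1 l1 z2 m2 l2 linf g) w := by
  have h2 : ∀ a, w - g⁻¹ ≠ z2 a := fun a h => hw2 a (by rw [← h]; ring)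
  exact ((differentiableAt_chiFun z1 m1 l1 hw1).add
    ((differentiableAt_chiFun z2 m2 l2 h2).comp w (differentiableAt_id.sub_const _))).sub_const _

/-- `φ_g` with the denominators `∏ (w - z₁)^(m₁+1)` and
`∏ (g (w - z₂) - 1)^(m₂+1) = g^M₂ ∏ (w - g⁻¹ - z₂)^(m₂+1)` cleared; the factor `g^M₂` keeps it
polynomial in `g` at `g = 0`. -/
noncomputable def coupledPoly (g : ℂ) : ℂ[X] :=
  (clearedNumer (fun a => X - C (z1 a)) m1 (fun a p => C (l1 a p)) -
      C linf * clearedDenom (fun a => X - C (z1 a)) m1) *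
    clearedDenom (fun a => C g * (X - C (z2 a)) - 1) m2 +
  clearedDenom (fun a => X - C (z1 a)) m1 *
    clearedNumer (fun a => C g * (X - C (z2 a)) - 1) m2 fun a p => C (g ^ (p + 1) * l2 a p)

lemma eval_coupledPoly (g w : ℂ) :
    (coupledPoly z1 m1 l1 z2 m2 l2 linf g).eval w =
      (clearedNumer (fun a => w - z1 a) m1 l1 - linf * clearedDenom (fun a => w - z1 a) m1) *
        clearedDenom (fun a => g * (w - z2 a) - 1) m2 +
      clearedDenom (fun a => w - z1 a) m1 *
        clearedNumer (fun a => g * (w - z2 a) - 1) m2 fun a p => g ^ (p + 1) * l2 a p := by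
  simp [coupledPoly, eval_clearedDenom, eval_clearedNumer]

lemma eval_coupledPoly_eq_mul {g w : ℂ} (hg : g ≠ 0) (hw1 : ∀ a, w ≠ z1 a)
    (hw2 : ∀ a, w ≠ z2 a + g⁻¹) :
    (coupledPoly z1 m1 l1 z2 m2 l2 linf g).eval w =
      clearedDenom (fun a => w - z1 a) m1 * clearedDenom (fun a => g * (w - z2 a) - 1) m2 *
        coupledTwist z1 m1 l1 z2 m2 l2 linf g w := by
  have h1 := clearedDenom_mul_sum_div m1 l1 fun a => sub_ne_zero.2 (hw1 a)
  have h2 := clearedDenom_mul_sum_div m2 (fun a p => g ^ (p + 1) * l2 a p)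
    fun a => mul_sub_sub_one_ne_zero hg (hw2 a)
  rw [eval_coupledPoly, ← h1, ← h2, coupledTwist, chiFun_sub_inv z2 m2 l2 hg, chiFun]
  ring

lemma eval_coupledPoly_zero {w : ℂ} (hw : ∀ a, w ≠ z1 a) :
    (coupledPoly z1 m1 l1 z2 m2 l2 linf 0).eval w =
      (-1) ^ (∑ a, (m2 a + 1)) * clearedDenom (fun a => w - z1 a) m1 *
        (chiFun z1 m1 l1 w - linf) := by
  have h1 := clearedDenom_mul_sum_div m1 l1 fun a => sub_ne_zero.2 (hw a)
  rw [eval_coupledPoly, ← h1, chiFun]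
  simp only [clearedDenom, clearedNumer, zero_mul, zero_sub, Finset.prod_pow_eq_pow_sum, ne_eq,
    Nat.add_eq_zero_iff, one_ne_zero, and_false, not_false_eq_true, zero_pow,
    Finset.sum_const_zero, mul_zero, add_zero]
  ring

lemma natDegree_coupledPoly_le_and_coeff (g : ℂ) :
    (coupledPoly z1 m1 l1 z2 m2 l2 linf g).natDegree ≤ (∑ a, (m1 a + 1)) + ∑ a, (m2 a + 1) ∧
    (coupledPoly z1 m1 l1 z2 m2 l2 linf g).coeff ((∑ a, (m1 a + 1)) + ∑ a, (m2 a + 1)) =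
      -(linf * g ^ ∑ a, (m2 a + 1)) := by
  have hu : ∀ a, (X - C (z1 a)).natDegree ≤ 1 := fun a => by compute_degree
  have hv : ∀ a, (C g * (X - C (z2 a)) - 1).natDegree ≤ 1 := fun a => by compute_degree
  set A₁ := clearedDenom (fun a => X - C (z1 a)) m1
  set N₁ := clearedNumer (fun a => X - C (z1 a)) m1 fun a p => C (l1 a p)
  set B₂ := clearedDenom (fun a => C g * (X - C (z2 a)) - 1) m2
  set N₂ := clearedNumer (fun a => C g * (X - C (z2 a)) - 1) m2 fun a p => C (g ^ (p + 1) * l2 a p)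
  have hA₁ := natDegree_clearedDenom_le hu m1
  have hB₂ := natDegree_clearedDenom_le hv m2
  have hN₁ := degree_clearedNumer_lt hu m1 l1
  have hN₂ := degree_clearedNumer_lt hv m2 fun a p => g ^ (p + 1) * l2 a p
  have hP : (N₁ - C linf * A₁).natDegree ≤ ∑ a, (m1 a + 1) :=
    (natDegree_sub_le _ _).trans <| max_le (natDegree_le_of_degree_le hN₁.le)
      (natDegree_C_mul_le _ _ |>.trans hA₁)
  have hA₁c : A₁.coeff (∑ a, (m1 a + 1)) = 1 := by
    simp [A₁, coeff_clearedDenom hu]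
  have hB₂c : B₂.coeff (∑ a, (m2 a + 1)) = g ^ ∑ a, (m2 a + 1) := by
    simp [B₂, coeff_clearedDenom hv, coeff_sub, coeff_C_mul, coeff_one, Finset.prod_pow_eq_pow_sum]
  refine ⟨(natDegree_add_le _ _).trans (max_le (natDegree_mul_le.trans (add_le_add hP hB₂))
    (natDegree_mul_le.trans (add_le_add hA₁ (natDegree_le_of_degree_le hN₂.le)))), ?_⟩
  rw [coupledPoly, coeff_add, coeff_mul_add_eq_of_natDegree_le hP hB₂,
    coeff_mul_add_eq_of_natDegree_le hA₁ (natDegree_le_of_degree_le hN₂.le),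
    coeff_eq_zero_of_degree_lt hN₂, coeff_sub, coeff_eq_zero_of_degree_lt hN₁, coeff_C_mul,
    hA₁c, hB₂c]
  ring

lemma coupledPoly_ne_zero (hlinf : linf ≠ 0) {g : ℂ} (hg : g ≠ 0) :
    coupledPoly z1 m1 l1 z2 m2 l2 linf g ≠ 0 := by
  intro h
  have := (natDegree_coupledPoly_le_and_coeff z1 m1 l1 z2 m2 l2 linf g).2
  rw [h, coeff_zero, zero_eq_neg] at this
  exact mul_ne_zero hlinf (pow_ne_zero _ hg) this

lemma contDiff_eval_coupledPoly :
    ContDiff ℂ 1 fun p : ℂ × ℂ => (coupledPoly z1 m1 l1 z2 m2 l2 linf p.1).eval p.2 := by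
  simp only [eval_coupledPoly, clearedDenom, clearedNumer]
  fun_prop

/-- Implicit function theorem for `coupledPoly` at `(0, ζ)`: `ζ` is a simple zero of
`coupledPoly 0 = ± ∏ (X - z₁)^(m₁+1) · φ₁`. -/
lemma exists_branch_of_simple_zero {ζ : ℂ} (hζ : ∀ a, ζ ≠ z1 a)
    (h0 : chiFun z1 m1 l1 ζ - linf = 0) (h1 : deriv (fun w => chiFun z1 m1 l1 w - linf) ζ ≠ 0) :
    ∃ Z : ℂ → ℂ, (fun g => Z g - ζ) =O[𝓝 0] id ∧
      ∀ᶠ g in 𝓝[≠] 0, IsCoupledZero z1 m1 l1 z2 m2 l2 linf g (Z g) := by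
  set f := fun p : ℂ × ℂ => (coupledPoly z1 m1 l1 z2 m2 l2 linf p.1).eval p.2
  have hf0 : (fun w => f (0, w)) =ᶠ[𝓝 ζ] fun w =>
      ((-1) ^ (∑ a, (m2 a + 1)) * clearedDenom (fun a => w - z1 a) m1) *
        (chiFun z1 m1 l1 w - linf) :=
    (eventually_forall_ne_nhds hζ).mono fun w hw => eval_coupledPoly_zero z1 m1 l1 z2 m2 l2 linf hw
  have hderiv : deriv (fun w => f (0, w)) ζ ≠ 0 := by
    rw [deriv_eq_mul_deriv_of_eventuallyEq hf0 (by unfold clearedDenom; fun_prop)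
      ((differentiableAt_chiFun z1 m1 l1 hζ).sub_const linf) h0]
    exact mul_ne_zero (mul_ne_zero (pow_ne_zero _ (neg_ne_zero.2 one_ne_zero))
      (clearedDenom_ne_zero m1 fun a => sub_ne_zero.2 (hζ a))) h1
  obtain ⟨Z, hZO, hZ0⟩ := exists_isBigO_implicit_zero
    (contDiff_eval_coupledPoly z1 m1 l1 z2 m2 l2 linf).contDiffAt
    (by simpa [h0] using hf0.self_of_nhds) hderiv
  simp only [sub_zero] at hZO
  have hZ : Tendsto Z (𝓝[≠] 0) (𝓝 ζ) := by
    have := hZO.trans_tendsto tendsto_id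
    exact (tendsto_sub_nhds_zero_iff.1 this).mono_left nhdsWithin_le_nhds
  refine ⟨Z, hZO, ?_⟩
  filter_upwards [self_mem_nhdsWithin, nhdsWithin_le_nhds hZ0,
    hZ.eventually (eventually_forall_ne_nhds hζ),
    Filter.eventually_all.2 fun a : Fin n₂ =>
      eventually_ne_add_inv tendsto_id hZ (tendsto_const_nhds (x := z2 a))]
    with g hg hfZ hpole1 hpole2
  refine ⟨hpole1, hpole2, ?_⟩
  rw [eval_coupledPoly_eq_mul z1 m1 l1 z2 m2 l2 linf hg hpole1 hpole2] at hfZ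
  exact (mul_eq_zero.1 hfZ).resolve_left (mul_ne_zero
    (clearedDenom_ne_zero m1 fun a => sub_ne_zero.2 (hpole1 a))
    (clearedDenom_ne_zero m2 fun a => mul_sub_sub_one_ne_zero hg (hpole2 a)))

/-- The `Z k` are roots of the nonzero polynomial `coupledPoly g` of degree at most `M₁ + M₂`,
so they are all of its roots and each has multiplicity one. -/
lemma isCoupledZero_complete_and_simple {ι : Type*} [Fintype ι] (hlinf : linf ≠ 0) {g : ℂ}
    (hg : g ≠ 0) (hcard : (∑ a, (m1 a + 1)) + ∑ a, (m2 a + 1) ≤ Fintype.card ι) {Z : ι → ℂ}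
    (hZinj : Function.Injective Z) (hZ : ∀ k, IsCoupledZero z1 m1 l1 z2 m2 l2 linf g (Z k)) :
    (∀ w, IsCoupledZero z1 m1 l1 z2 m2 l2 linf g w → ∃ k, Z k = w) ∧
      ∀ k, deriv (coupledTwist z1 m1 l1 z2 m2 l2 linf g) (Z k) ≠ 0 := by
  classical
  set Q := coupledPoly z1 m1 l1 z2 m2 l2 linf g
  have hQ : Q ≠ 0 := coupledPoly_ne_zero z1 m1 l1 z2 m2 l2 linf hlinf hg
  have hroot : ∀ w, IsCoupledZero z1 m1 l1 z2 m2 l2 linf g w → Q.IsRoot w :=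
    fun w ⟨h1, h2, h0⟩ => by
      rw [IsRoot, eval_coupledPoly_eq_mul z1 m1 l1 z2 m2 l2 linf hg h1 h2, h0, mul_zero]
  have hroots : Q.roots = (Finset.univ.image Z).val := by
    refine roots_eq_of_natDegree_le_card hQ ?_ ?_
    · simp only [Finset.mem_image, Finset.mem_univ, true_and, forall_exists_index]
      rintro _ k rfl
      exact hroot _ (hZ k)
    · rw [Finset.card_image_of_injective _ hZinj, Finset.card_univ]
      exact (natDegree_coupledPoly_le_and_coeff z1 m1 l1 z2 m2 l2 linf g).1.trans hcard
  refine ⟨fun w hw => ?_, fun k hderiv => ?_⟩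
  · have : w ∈ Q.roots := (mem_roots hQ).2 (hroot w hw)
    simpa [hroots] using this
  · obtain ⟨h1, h2, h0⟩ := hZ k
    have hsimple : Q.rootMultiplicity (Z k) = 1 := by
      rw [← count_roots, hroots]
      exact Multiset.count_eq_one_of_mem (Finset.nodup _) (by simp)
    have hQeq : (fun w => Q.eval w) =ᶠ[𝓝 (Z k)] fun w =>
        (clearedDenom (fun a => w - z1 a) m1 * clearedDenom (fun a => g * (w - z2 a) - 1) m2) *
          coupledTwist z1 m1 l1 z2 m2 l2 linf g w :=
      (eventually_forall_ne_nhds h1).and (eventually_forall_ne_nhds h2) |>.mono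
        fun w hw => eval_coupledPoly_eq_mul z1 m1 l1 z2 m2 l2 linf hg hw.1 hw.2
    have hQ' := deriv_eq_mul_deriv_of_eventuallyEq hQeq (by unfold clearedDenom; fun_prop)
      (differentiableAt_coupledTwist z1 m1 l1 z2 m2 l2 linf h1 h2) h0
    rw [Polynomial.deriv, hderiv, mul_zero] at hQ'
    have := (one_lt_rootMultiplicity_iff_isRoot hQ).2 ⟨hroot _ (hZ k), hQ'⟩
    omega

end CoupledTwist

section Labels

variable {M₁ M₂ : ℕ} (ζ1 : Fin M₁ → ℂ) (ζ2 : Fin M₂ → ℂ)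

noncomputable def labelDeviation (ζ : Fin M₁ ⊕ Fin M₂ → ℝ → ℂ) : Fin M₁ ⊕ Fin M₂ → ℝ → ℂ
  | .inl i, γ => ζ (.inl i) γ - ζ1 i
  | .inr j, γ => ζ (.inr j) γ - (γ : ℂ)⁻¹ - ζ2 j

variable {ζ1 ζ2} {ζ : Fin M₁ ⊕ Fin M₂ → ℝ → ℂ}

lemma exists_labelDeviation_le (h : ∀ k, labelDeviation ζ1 ζ2 ζ k =O[𝓝 0] fun γ : ℝ => (γ : ℂ)) :
    ∃ C > 0, ∀ᶠ γ in 𝓝 0, ∀ k, ‖labelDeviation ζ1 ζ2 ζ k γ‖ ≤ C * |γ| := by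
  obtain ⟨C, hC, hCw⟩ := (isBigO_pi.2 h).exists_pos
  refine ⟨C, hC, Filter.eventually_all.2 fun k => ?_⟩
  simpa using (isBigOWith_pi hC.le).1 hCw k |>.bound

lemma tendsto_labelDeviation_of_le {C : ℝ}
    (h : ∀ᶠ γ in 𝓝[≠] 0, ∀ k, ‖labelDeviation ζ1 ζ2 ζ k γ‖ ≤ C * |γ|) (k : Fin M₁ ⊕ Fin M₂) :
    Tendsto (labelDeviation ζ1 ζ2 ζ k) (𝓝[≠] 0) (𝓝 0) :=
  squeeze_zero_norm' (h.mono fun _ hγ => hγ k) <| by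
    simpa using ((continuous_abs.tendsto 0).const_mul C).mono_left nhdsWithin_le_nhds

lemma tendsto_of_labelDeviation_inl {l : Filter ℝ} {i : Fin M₁}
    (h : Tendsto (labelDeviation ζ1 ζ2 ζ (.inl i)) l (𝓝 0)) :
    Tendsto (ζ (.inl i)) l (𝓝 (ζ1 i)) := by
  simpa [labelDeviation] using h.add_const (ζ1 i)

lemma tendsto_of_labelDeviation_inr {l : Filter ℝ} {j : Fin M₂}
    (h : Tendsto (labelDeviation ζ1 ζ2 ζ (.inr j)) l (𝓝 0)) :
    Tendsto (fun γ => ζ (.inr j) γ - (γ : ℂ)⁻¹) l (𝓝 (ζ2 j)) := by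
  simpa [labelDeviation] using h.add_const (ζ2 j)

lemma eventually_forall_ne_of_labelDeviation
    (hζ : ∀ k, Tendsto (labelDeviation ζ1 ζ2 ζ k) (𝓝[≠] 0) (𝓝 0))
    (hζ1 : Function.Injective ζ1) (hζ2 : Function.Injective ζ2) {ζ' : Fin M₁ ⊕ Fin M₂ → ℝ → ℂ}
    (hζ' : ∀ k, Tendsto (labelDeviation ζ1 ζ2 ζ' k) (𝓝[≠] 0) (𝓝 0)) :
    ∀ᶠ γ in 𝓝[≠] 0, ∀ k k', k ≠ k' → ζ k γ ≠ ζ' k' γ := by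
  refine Filter.eventually_all.2 fun k => Filter.eventually_all.2 fun k' => ?_
  by_cases hk : k = k'
  · exact Filter.Eventually.of_forall fun _ h => absurd hk h
  refine (?_ : ∀ᶠ γ in 𝓝[≠] 0, ζ k γ ≠ ζ' k' γ).mono fun _ h _ => h
  rcases k with i | j <;> rcases k' with i' | j'
  · exact (tendsto_of_labelDeviation_inl (hζ (.inl i))).eventually_ne_of_ne
      (tendsto_of_labelDeviation_inl (hζ' (.inl i'))) (hζ1.ne fun h => hk (by rw [h]))
  · exact (eventually_ne_add_inv tendsto_ofReal_nhdsNE (tendsto_of_labelDeviation_inl (hζ (.inl i)))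
      (tendsto_of_labelDeviation_inr (hζ' (.inr j')))).mono fun _ h => by rwa [sub_add_cancel] at h
  · exact (eventually_ne_add_inv tendsto_ofReal_nhdsNE
      (tendsto_of_labelDeviation_inl (hζ' (.inl i'))) (tendsto_of_labelDeviation_inr (hζ (.inr j))))
      |>.mono fun _ h => by
        rw [sub_add_cancel] at h; exact h.symm
  · exact ((tendsto_of_labelDeviation_inr (hζ (.inr j))).eventually_ne_of_ne
      (tendsto_of_labelDeviation_inr (hζ' (.inr j'))) (hζ2.ne fun h => hk (by rw [h]))).mono
      fun _ h he => h (by rw [he])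

lemma eventually_not_pole_of_labelDeviation
    (hζ : ∀ k, Tendsto (labelDeviation ζ1 ζ2 ζ k) (𝓝[≠] 0) (𝓝 0))
    {n₁ n₂ : ℕ} {z1 : Fin n₁ → ℂ} {z2 : Fin n₂ → ℂ}
    (hζ1p : ∀ i a, ζ1 i ≠ z1 a) (hζ2p : ∀ j a, ζ2 j ≠ z2 a) (k : Fin M₁ ⊕ Fin M₂) :
    ∀ᶠ γ in 𝓝[≠] 0, (∀ a, ζ k γ ≠ z1 a) ∧ ∀ a, ζ k γ ≠ z2 a + (γ : ℂ)⁻¹ := by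
  rcases k with i | j
  · have h := tendsto_of_labelDeviation_inl (hζ (.inl i))
    exact (h.eventually (eventually_forall_ne_nhds (hζ1p i))).and <| Filter.eventually_all.2
      fun a => eventually_ne_add_inv tendsto_ofReal_nhdsNE h tendsto_const_nhds
  · have h := tendsto_of_labelDeviation_inr (hζ (.inr j))
    refine (Filter.eventually_all.2 fun a => eventually_ne_add_inv tendsto_ofReal_nhdsNE
      (tendsto_const_nhds (x := z1 a)) h).and (h.eventually (eventually_forall_ne_nhds (hζ2p j)))
      |>.mono fun γ h => ⟨fun a ha => h.1 a ?_, fun a ha => h.2 a ?_⟩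
    · rw [sub_add_cancel, ha]
    · rw [ha, add_sub_cancel_right]

end Labels

section LabelledZeros

variable {n₁ n₂ : ℕ} {z1 : Fin n₁ → ℂ} {m1 : Fin n₁ → ℕ} {l1 : Fin n₁ → ℕ → ℂ}
  {z2 : Fin n₂ → ℂ} {m2 : Fin n₂ → ℕ} {l2 : Fin n₂ → ℕ → ℂ} {linf : ℂ}
  {M₁ M₂ : ℕ} {ζ1 : Fin M₁ → ℂ} {ζ2 : Fin M₂ → ℂ}

lemma exists_labelled_zeros (hζ1p : ∀ i a, ζ1 i ≠ z1 a) (hζ2p : ∀ j a, ζ2 j ≠ z2 a)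
    (hζ1z : ∀ i, chiFun z1 m1 l1 (ζ1 i) - linf = 0)
    (hζ2z : ∀ j, chiFun z2 m2 l2 (ζ2 j) - linf = 0)
    (hζ1s : ∀ i, deriv (fun w => chiFun z1 m1 l1 w - linf) (ζ1 i) ≠ 0)
    (hζ2s : ∀ j, deriv (fun w => chiFun z2 m2 l2 w - linf) (ζ2 j) ≠ 0) :
    ∃ ζ : Fin M₁ ⊕ Fin M₂ → ℝ → ℂ, ∃ C > 0,
      (∀ᶠ γ in 𝓝 0, ∀ k, ‖labelDeviation ζ1 ζ2 ζ k γ‖ ≤ C * |γ|) ∧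
      ∀ᶠ γ : ℝ in 𝓝[≠] 0, ∀ k, IsCoupledZero z1 m1 l1 z2 m2 l2 linf γ (ζ k γ) := by
  choose Z1 hZ1O hZ1 using fun i =>
    exists_branch_of_simple_zero z1 m1 l1 z2 m2 l2 linf (hζ1p i) (hζ1z i) (hζ1s i)
  choose Z2 hZ2O hZ2 using fun j =>
    exists_branch_of_simple_zero z2 m2 l2 z1 m1 l1 linf (hζ2p j) (hζ2z j) (hζ2s j)
  -- the zeros near `γ⁻¹` are those of the swapped problem at `-γ`, shifted by `γ⁻¹`
  let ζ : Fin M₁ ⊕ Fin M₂ → ℝ → ℂ :=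
    Sum.elim (fun i γ => Z1 i γ) fun j γ => Z2 j (-γ) + (γ : ℂ)⁻¹
  have hofReal : Tendsto (fun γ : ℝ => (γ : ℂ)) (𝓝 0) (𝓝 0) :=
    Complex.continuous_ofReal.tendsto' 0 0 Complex.ofReal_zero
  have hneg : Tendsto (fun γ : ℝ => -(γ : ℂ)) (𝓝[≠] 0) (𝓝[≠] 0) := by
    simpa using tendsto_ofReal_mul_nhdsNE (neg_ne_zero.2 one_ne_zero)
  have hO : ∀ k, labelDeviation ζ1 ζ2 ζ k =O[𝓝 0] fun γ : ℝ => (γ : ℂ) := by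
    rintro (i | j)
    · exact (hZ1O i).comp_tendsto hofReal
    · refine (isBigO_neg_right.1 <| (hZ2O j).comp_tendsto <| neg_zero (G := ℂ) ▸ hofReal.neg)
        |>.congr_left fun γ => ?_
      simp [ζ, labelDeviation]
  have hzero : ∀ᶠ γ : ℝ in 𝓝[≠] 0, ∀ k, IsCoupledZero z1 m1 l1 z2 m2 l2 linf γ (ζ k γ) := by
    refine Filter.eventually_all.2 (Sum.rec (fun i => ?_) fun j => ?_)
    · exact tendsto_ofReal_nhdsNE.eventually (hZ1 i)
    · exact (hneg.eventually (hZ2 j)).mono fun γ h => h.of_swap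
  obtain ⟨C, hC, hbound⟩ := exists_labelDeviation_le hO
  exact ⟨ζ, C, hC, hbound, hzero⟩

lemma eventually_eq_of_labelDeviation (hζ1 : Function.Injective ζ1) (hζ2 : Function.Injective ζ2)
    (hζ1p : ∀ i a, ζ1 i ≠ z1 a) (hζ2p : ∀ j a, ζ2 j ≠ z2 a) {ζ ζ' : Fin M₁ ⊕ Fin M₂ → ℝ → ℂ}
    (hζ : ∀ k, Tendsto (labelDeviation ζ1 ζ2 ζ k) (𝓝[≠] 0) (𝓝 0))
    (hζ' : ∀ k, Tendsto (labelDeviation ζ1 ζ2 ζ' k) (𝓝[≠] 0) (𝓝 0))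
    (hcomplete : ∀ᶠ γ : ℝ in 𝓝[≠] 0,
      ∀ w, IsCoupledZero z1 m1 l1 z2 m2 l2 linf γ w → ∃ k, ζ k γ = w)
    (hzero' : ∀ᶠ γ : ℝ in 𝓝[≠] 0, ∀ k, coupledTwist z1 m1 l1 z2 m2 l2 linf γ (ζ' k γ) = 0) :
    ∀ᶠ γ in 𝓝[≠] 0, ∀ k, ζ' k γ = ζ k γ := by
  filter_upwards [hcomplete, hzero', eventually_forall_ne_of_labelDeviation hζ' hζ1 hζ2 hζ,
    Filter.eventually_all.2 (eventually_not_pole_of_labelDeviation hζ' hζ1p hζ2p)]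
    with γ hcomplete hzero' hsep hpole k
  obtain ⟨k', hk'⟩ := hcomplete (ζ' k γ) ⟨(hpole k).1, (hpole k).2, hzero' k⟩
  by_contra hne
  exact hsep k k' (fun h => hne (h ▸ hk'.symm)) hk'.symm

end LabelledZeros

theorem decoupling_of_zeros
    {n₁ n₂ M₁ M₂ : ℕ}
    (z1 : Fin n₁ → ℂ) (m1 : Fin n₁ → ℕ) (l1 : Fin n₁ → ℕ → ℂ)
    (z2 : Fin n₂ → ℂ) (m2 : Fin n₂ → ℕ) (l2 : Fin n₂ → ℕ → ℂ)
    (linf : ℂ) (hlinf : linf ≠ 0)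
    (hM1 : M₁ = ∑ a, (m1 a + 1)) (hM2 : M₂ = ∑ a, (m2 a + 1))
    (ζ1 : Fin M₁ → ℂ) (ζ2 : Fin M₂ → ℂ)
    (hζ1inj : Function.Injective ζ1) (hζ2inj : Function.Injective ζ2)
    (hζ1p : ∀ i a, ζ1 i ≠ z1 a) (hζ2p : ∀ j a, ζ2 j ≠ z2 a)
    (hζ1z : ∀ i, chiFun z1 m1 l1 (ζ1 i) - linf = 0)
    (hζ2z : ∀ j, chiFun z2 m2 l2 (ζ2 j) - linf = 0)
    (hζ1s : ∀ i, deriv (fun w => chiFun z1 m1 l1 w - linf) (ζ1 i) ≠ 0)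
    (hζ2s : ∀ j, deriv (fun w => chiFun z2 m2 l2 w - linf) (ζ2 j) ≠ 0) :
    ∃ ε > (0 : ℝ), ∃ ζ : Fin M₁ ⊕ Fin M₂ → ℝ → ℂ, ∃ C > (0 : ℝ),
      (∀ γ : ℝ, 0 < |γ| → |γ| < ε →
        -- (i) the `ζ i γ` are pairwise distinct …
        (Function.Injective fun i => ζ i γ) ∧
        -- … each of them is a simple zero of the coupled twist function `φ_γ` …
        (∀ i, (∀ a, ζ i γ ≠ z1 a) ∧ (∀ a, ζ i γ ≠ z2 a + (γ : ℂ)⁻¹) ∧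
          chiFun z1 m1 l1 (ζ i γ) + chiFun z2 m2 l2 (ζ i γ - (γ : ℂ)⁻¹) - linf = 0 ∧
          deriv (fun w => chiFun z1 m1 l1 w + chiFun z2 m2 l2 (w - (γ : ℂ)⁻¹) - linf)
            (ζ i γ) ≠ 0) ∧
        -- … and they are exactly the zeros of `φ_γ`
        (∀ w : ℂ, (∀ a, w ≠ z1 a) → (∀ a, w ≠ z2 a + (γ : ℂ)⁻¹) →
          chiFun z1 m1 l1 w + chiFun z2 m2 l2 (w - (γ : ℂ)⁻¹) - linf = 0 →
          ∃ i, ζ i γ = w) ∧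
        -- (ii) asymptotics as γ → 0
        (∀ i : Fin M₁, ‖ζ (Sum.inl i) γ - ζ1 i‖ ≤ C * |γ|) ∧
        (∀ j : Fin M₂, ‖ζ (Sum.inr j) γ - (γ : ℂ)⁻¹ - ζ2 j‖ ≤ C * |γ|)) ∧
      -- uniqueness of the labelling satisfying the asymptotics (ii)
      (∀ (ζ' : Fin M₁ ⊕ Fin M₂ → ℝ → ℂ) (C' : ℝ), 0 < C' →
        (∀ γ : ℝ, 0 < |γ| → |γ| < ε →
          (∀ i, chiFun z1 m1 l1 (ζ' i γ)
              + chiFun z2 m2 l2 (ζ' i γ - (γ : ℂ)⁻¹) - linf = 0) ∧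
          (∀ i : Fin M₁, ‖ζ' (Sum.inl i) γ - ζ1 i‖ ≤ C' * |γ|) ∧
          (∀ j : Fin M₂, ‖ζ' (Sum.inr j) γ - (γ : ℂ)⁻¹ - ζ2 j‖ ≤ C' * |γ|)) →
        ∃ ε' > (0 : ℝ), ∀ γ : ℝ, 0 < |γ| → |γ| < ε' → ∀ i, ζ' i γ = ζ i γ) := by
  obtain ⟨ζ, C, hC, hbound, hzero⟩ := exists_labelled_zeros hζ1p hζ2p hζ1z hζ2z hζ1s hζ2s
  have hdev := tendsto_labelDeviation_of_le (nhdsWithin_le_nhds hbound)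
  have hgood : ∀ᶠ γ : ℝ in 𝓝[≠] 0, (Function.Injective fun k => ζ k γ) ∧
      (∀ k, IsCoupledZero z1 m1 l1 z2 m2 l2 linf γ (ζ k γ)) ∧
      ∀ k, ‖labelDeviation ζ1 ζ2 ζ k γ‖ ≤ C * |γ| :=
    ((eventually_forall_ne_of_labelDeviation hdev hζ1inj hζ2inj hdev).mono
      fun _ h k k' hk => by_contra (h k k' · hk)).and (hzero.and (nhdsWithin_le_nhds hbound))
  obtain ⟨ε, hε, hεgood⟩ := eventually_nhdsNE_zero_iff.1 hgood
  refine ⟨ε, hε, ζ, C, hC, fun γ hγ hγε => ?_, fun ζ' C' _ hζ' => ?_⟩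
  · obtain ⟨hinj, hz, hb⟩ := hεgood γ hγ hγε
    obtain ⟨hcomplete, hsimple⟩ := isCoupledZero_complete_and_simple z1 m1 l1 z2 m2 l2 linf
      hlinf (Complex.ofReal_ne_zero.2 (abs_pos.1 hγ)) (by simp [hM1, hM2]) hinj hz
    exact ⟨hinj, fun k => ⟨(hz k).1, (hz k).2.1, (hz k).2.2, hsimple k⟩,
      fun w h1 h2 h0 => hcomplete w ⟨h1, h2, h0⟩, fun i => hb (.inl i), fun j => hb (.inr j)⟩
  · replace hζ' := eventually_nhdsNE_zero_iff.2 ⟨ε, hε, hζ'⟩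
    refine eventually_nhdsNE_zero_iff.1 <| eventually_eq_of_labelDeviation hζ1inj hζ2inj hζ1p hζ2p
      hdev (tendsto_labelDeviation_of_le (hζ'.mono fun _ h => Sum.rec h.2.1 h.2.2))
      ?_ (hζ'.mono fun _ h => h.1)
    filter_upwards [hgood, self_mem_nhdsWithin] with γ ⟨hinj, hz, _⟩ hγ
    exact (isCoupledZero_complete_and_simple z1 m1 l1 z2 m2 l2 linf hlinf
      (Complex.ofReal_ne_zero.2 hγ) (by simp [hM1, hM2]) hinj hz).1
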